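/- For t > 0 and real ξ, ξ₁, ξ₂ with (ξ−ξ₁)(ξ−ξ₂) ≠ 0 and (ξ−ξ₁)(ξ₁+ξ₂) ≠ 0, define ϱ(t, ξ, ξ₁, ξ₂) := (e^{2it(ξ−ξ₁)(ξ−ξ₂)} − 1)/(2(ξ−ξ₁)(ξ−ξ₂)) − (e^{2it(ξ−ξ₁)(ξ₁+ξ₂)} − 1)/((ξ−ξ₁)(ξ₁+ξ₂)). Then there exists κ₀ ∈ (0,1) such that for every κ ∈ (0, κ₀] there exists k₀ such that for all real k ≥ k₀, setting t = κ/k², for all ξ ∈ [1/2, 1] and all ξ₁, ξ₂ ∈ [k + 1/8, k + 1/4], one has −Im ϱ(t, ξ, ξ₁, ξ₂) ≥ t/2. -/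

import Mathlib

/-! With `t = κ/k²`, the phase `2t(ξ₁ - ξ)(ξ₁ + ξ₂)` lies in `(0, 6κ] ⊆ (0, 1]`. There the sine is
squeezed between `x - x³/6` and `x`, so the first term of `-Im ϱ` is at least `5t/3`, while
`sin x ≤ x` bounds the second by `t`. -/

/-- The oscillatory kernel
`ϱ(t,ξ,ξ₁,ξ₂) = (e^{2it(ξ−ξ₁)(ξ−ξ₂)} − 1)/(2(ξ−ξ₁)(ξ−ξ₂))
              − (e^{2it(ξ−ξ₁)(ξ₁+ξ₂)} − 1)/((ξ−ξ₁)(ξ₁+ξ₂))`. -/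
noncomputable def varrho (t ξ ξ₁ ξ₂ : ℝ) : ℂ :=
  (Complex.exp (2 * Complex.I * (t : ℂ) * ((ξ - ξ₁ : ℝ) : ℂ) * ((ξ - ξ₂ : ℝ) : ℂ)) - 1)
      / (2 * ((ξ - ξ₁ : ℝ) : ℂ) * ((ξ - ξ₂ : ℝ) : ℂ))
    - (Complex.exp (2 * Complex.I * (t : ℂ) * ((ξ - ξ₁ : ℝ) : ℂ) * ((ξ₁ + ξ₂ : ℝ) : ℂ)) - 1)
      / (((ξ - ξ₁ : ℝ) : ℂ) * ((ξ₁ + ξ₂ : ℝ) : ℂ))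

open Real

lemma Complex.im_exp_mul_I_sub_one_div_ofReal (θ c : ℝ) :
    ((Complex.exp (θ * Complex.I) - 1) / c).im = Real.sin θ / c := by
  rw [Complex.div_ofReal_im, Complex.exp_mul_I]
  simp [Complex.sin_ofReal_re]

lemma neg_varrho_im (t ξ ξ₁ ξ₂ : ℝ) :
    -(varrho t ξ ξ₁ ξ₂).im =
      sin (2 * t * ((ξ₁ - ξ) * (ξ₁ + ξ₂))) / ((ξ₁ - ξ) * (ξ₁ + ξ₂))
        - sin (2 * t * ((ξ₁ - ξ) * (ξ₂ - ξ))) / (2 * ((ξ₁ - ξ) * (ξ₂ - ξ))) := by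
  have phase (a b : ℝ) : 2 * Complex.I * (t : ℂ) * (a : ℂ) * (b : ℂ)
      = ((2 * t * (a * b) : ℝ) : ℂ) * Complex.I := by push_cast; ring
  rw [varrho, phase, phase, Complex.sub_im,
    show 2 * ((ξ - ξ₁ : ℝ) : ℂ) * ((ξ - ξ₂ : ℝ) : ℂ) = ((2 * ((ξ - ξ₁) * (ξ - ξ₂)) : ℝ) : ℂ) by
      push_cast; ring,
    ← Complex.ofReal_mul, Complex.im_exp_mul_I_sub_one_div_ofReal,
    Complex.im_exp_mul_I_sub_one_div_ofReal]
  have h₁ : (ξ - ξ₁) * (ξ₁ + ξ₂) = -((ξ₁ - ξ) * (ξ₁ + ξ₂)) := by ring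
  have h₂ : (ξ - ξ₁) * (ξ - ξ₂) = (ξ₁ - ξ) * (ξ₂ - ξ) := by ring
  rw [h₁, h₂, mul_neg, sin_neg, neg_div_neg_eq]
  ring

lemma sin_two_mul_mul_div_two_mul_le {t a : ℝ} (ht : 0 ≤ t) (ha : 0 < a) :
    sin (2 * t * a) / (2 * a) ≤ t := by
  rw [div_le_iff₀ (by positivity)]
  linarith [sin_le (by positivity : 0 ≤ 2 * t * a)]

lemma five_thirds_mul_le_sin_two_mul_mul_div {t a : ℝ} (ht : 0 < t) (ha : 0 < a)
    (h : 2 * t * a ≤ 1) : 5 / 3 * t ≤ sin (2 * t * a) / a := by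
  have hx : 0 < 2 * t * a := by positivity
  rw [le_div_iff₀ ha]
  have hcube : (2 * t * a) ^ 3 ≤ 2 * t * a := by
    nlinarith [pow_le_one₀ hx.le h (n := 2)]
  linarith [sin_gt_sub_cube hx]

/-- There is `κ₀ ∈ (0,1)` such that for every `κ ∈ (0,κ₀]` there is `k₀` with: for all `k ≥ k₀`,
setting `t = κ/k²`, for all `ξ ∈ [1/2,1]` and `ξ₁, ξ₂ ∈ [k+1/8, k+1/4]`,
`−Im ϱ(t,ξ,ξ₁,ξ₂) ≥ t/2`. -/
theorem stmt_14 :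
    ∃ κ₀ ∈ Set.Ioo (0 : ℝ) 1, ∀ κ ∈ Set.Ioc (0 : ℝ) κ₀, ∃ k₀ : ℝ, ∀ k ≥ k₀,
      ∀ ξ ∈ Set.Icc (1 / 2 : ℝ) 1,
      ∀ ξ₁ ∈ Set.Icc (k + 1 / 8) (k + 1 / 4),
      ∀ ξ₂ ∈ Set.Icc (k + 1 / 8) (k + 1 / 4),
        (κ / k ^ 2) / 2 ≤ -(varrho (κ / k ^ 2) ξ ξ₁ ξ₂).im := by
  refine ⟨1 / 6, ⟨by norm_num, by norm_num⟩, ?_⟩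
  rintro κ ⟨hκ, hκ₀⟩
  refine ⟨1, fun k hk ξ ⟨hξ, hξ'⟩ ξ₁ ⟨hξ₁, hξ₁'⟩ ξ₂ ⟨hξ₂, hξ₂'⟩ => ?_⟩
  set t := κ / k ^ 2 with ht_def
  have ht : 0 < t := by positivity
  have hp : 0 < ξ₁ - ξ := by linarith
  have hp_le : ξ₁ - ξ ≤ k := by linarith
  have hs_le : ξ₁ + ξ₂ ≤ 3 * k := by linarith
  have hphase : 2 * t * ((ξ₁ - ξ) * (ξ₁ + ξ₂)) ≤ 1 :=
    calc 2 * t * ((ξ₁ - ξ) * (ξ₁ + ξ₂)) ≤ 2 * t * (k * (3 * k)) := by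
          gcongr; all_goals linarith
      _ = 6 * κ := by rw [ht_def]; field_simp; ring
      _ ≤ 1 := by linarith
  rw [neg_varrho_im]
  linarith [five_thirds_mul_le_sin_two_mul_mul_div ht (mul_pos hp (by linarith)) hphase,
    sin_two_mul_mul_div_two_mul_le ht.le (mul_pos hp (by linarith : 0 < ξ₂ - ξ))]
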